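/- arXiv:1209.4975 — 2 statements merged into one kernel-verified Lean document; each statement's English description precedes it below -/
import Mathlib

section
/- The family I_X = {I ⊆ U : R̲(I) ⊆ X} is the independent-set family of a matroid on U (it satisfies the nonempty, hereditary, and exchange axioms). -/
open Finset

variable {α : Type*} [Fintype α] [DecidableEq α]

/-- The lower approximation of `S` w.r.t. the equivalence relation `R`:
`{x : [x]_R ⊆ S}`. -/
def lowerApprox (R : Setoid α) [DecidableRel R.r] (S : Finset α) : Finset α :=
  Finset.univ.filter fun x => ∀ y, R.r x y → y ∈ S

/-!
The lower approximation of `I` is the union of the `R`-classes contained in `I`, so adding `u`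
to `I` can only add the class of `u`, and only when that class lies in `insert u I`. If no
`u ∈ I₂ \ I₁` can be added to `I₁`, then for each such `u` the class of `u` lies in
`insert u I₁` and, not being contained in `I₂`, meets `I₁ \ I₂`. Distinct such `u` lie in
distinct classes, hence `#(I₂ \ I₁) ≤ #(I₁ \ I₂)`, i.e. `#I₂ ≤ #I₁`.
-/

section
variable (R : Setoid α) [DecidableRel R.r]

@[simp]
theorem mem_lowerApprox {S : Finset α} {x : α} :
    x ∈ lowerApprox R S ↔ ∀ y, R.r x y → y ∈ S := by
  simp [lowerApprox]

theorem lowerApprox_empty : lowerApprox R ∅ = ∅ :=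
  eq_empty_of_forall_notMem fun x hx => notMem_empty x ((mem_lowerApprox R).1 hx x (R.refl x))

theorem lowerApprox_mono {S T : Finset α} (h : S ⊆ T) : lowerApprox R S ⊆ lowerApprox R T :=
  fun _ hx => (mem_lowerApprox R).2 fun y hy => h ((mem_lowerApprox R).1 hx y hy)

theorem rel_of_mem_lowerApprox_insert {S : Finset α} {u x : α}
    (hx : x ∈ lowerApprox R (insert u S)) (hxS : x ∉ lowerApprox R S) : R.r x u := by
  by_contra hxu
  refine hxS ((mem_lowerApprox R).2 fun y hy => ?_)
  exact (mem_insert.1 ((mem_lowerApprox R).1 hx y hy)).resolve_left (by rintro rfl; exact hxu hy)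

theorem class_subset_insert_and_exists_rel_mem_sdiff {X I₁ I₂ : Finset α} {u : α}
    (h₁ : lowerApprox R I₁ ⊆ X) (h₂ : lowerApprox R I₂ ⊆ X) (hu : u ∈ I₂)
    (hbad : ¬ lowerApprox R (insert u I₁) ⊆ X) :
    (∀ y, R.r u y → y ∈ insert u I₁) ∧ ∃ z ∈ I₁ \ I₂, R.r u z := by
  obtain ⟨x, hx, hxX⟩ := not_subset.1 hbad
  have hxu : R.r x u := rel_of_mem_lowerApprox_insert R hx fun h => hxX (h₁ h)
  obtain ⟨z, hxz, hzI₂⟩ : ∃ z, R.r x z ∧ z ∉ I₂ := by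
    by_contra! h
    exact hxX (h₂ ((mem_lowerApprox R).2 h))
  have hzI₁ : z ∈ I₁ :=
    (mem_insert.1 ((mem_lowerApprox R).1 hx z hxz)).resolve_left (by rintro rfl; exact hzI₂ hu)
  exact ⟨fun y hy => (mem_lowerApprox R).1 hx y (R.trans hxu hy),
    z, mem_sdiff.2 ⟨hzI₁, hzI₂⟩, R.trans (R.symm hxu) hxz⟩

theorem exists_mem_sdiff_lowerApprox_insert_subset {X I₁ I₂ : Finset α}
    (h₁ : lowerApprox R I₁ ⊆ X) (h₂ : lowerApprox R I₂ ⊆ X) (hlt : #I₁ < #I₂) :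
    ∃ u ∈ I₂ \ I₁, lowerApprox R (insert u I₁) ⊆ X := by
  by_contra! hbad
  have key (u : α) (hu : u ∈ I₂ \ I₁) :=
    class_subset_insert_and_exists_rel_mem_sdiff R h₁ h₂ (mem_sdiff.1 hu).1 (hbad u hu)
  have hcard : #(I₂ \ I₁) ≤ #(I₁ \ I₂) := by
    refine card_le_card_of_forall_subsingleton R.r (fun u hu => (key u hu).2) ?_
    rintro z - a ⟨ha, haz⟩ b ⟨hb, hbz⟩
    have hab : R.r a b := R.trans haz (R.symm hbz)
    exact ((mem_insert.1 ((key a ha).1 b hab)).resolve_right (mem_sdiff.1 hb).2).symm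
  exact hlt.not_ge (card_sdiff_le_card_sdiff_iff.1 hcard)

end

theorem parametric_family_is_matroid (R : Setoid α) [DecidableRel R.r] (X : Finset α) :
    (lowerApprox R (∅ : Finset α) ⊆ X) ∧
    (∀ I I' : Finset α, lowerApprox R I ⊆ X → I' ⊆ I → lowerApprox R I' ⊆ X) ∧
    (∀ I₁ I₂ : Finset α, lowerApprox R I₁ ⊆ X → lowerApprox R I₂ ⊆ X →
      I₁.card < I₂.card → ∃ u ∈ I₂ \ I₁, lowerApprox R (insert u I₁) ⊆ X) :=
  ⟨(lowerApprox_empty R).symm ▸ empty_subset X,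
    fun _ _ hI hsub => (lowerApprox_mono R hsub).trans hI,
    fun _ _ => exists_mem_sdiff_lowerApprox_insert_subset R⟩
end

section
/- For the parametric matroid M_X, the closure operator satisfies cl(Y) = Y ∪ {y ∈ U \ Y : f_R((Y ∪ {y}) \ R̲(X)) − f_R(Y \ R̲(X)) = 1} for all Y ⊆ U. -/
/-! For `I ⊆ Y`, a class contained in `I` fails to lie in `X` exactly when it misses `R̲(X)`,
i.e. when it is one of the classes inside `Y \ R̲(X)`. So `I` is independent iff it contains
none of these `f_R(Y \ R̲(X))` pairwise disjoint classes: deleting one representative of each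
gives an independent subset of `Y`, and no independent subset can omit fewer points. Hence
`r(Y) = |Y| - f_R(Y \ R̲(X))`. Adding a point `u ∉ Y` raises `|Y|` by one and `f_R` by at most
one, so the rank stays put exactly when `f_R` goes up. -/

open Finset

variable {α : Type*} [Fintype α] [DecidableEq α]

/-- The equivalence class of `x` w.r.t. `R`, as a finset. -/
def cls (R : Setoid α) [DecidableRel R.r] (x : α) : Finset α :=
  Finset.univ.filter fun y => R.r x y


/-- The lower approximation number: the number of equivalence classes of `R`
contained in `S`. -/
def lowerNum (R : Setoid α) [DecidableRel R.r] (S : Finset α) : ℕ :=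
  ((Finset.univ.image (cls R)).filter fun P => P ⊆ S).card


open Classical in
/-- The rank of `X` w.r.t. an independence family `𝓘`: the maximum cardinality
of a member of `𝓘` contained in `X`. -/
noncomputable def rank (𝓘 : Finset α → Prop) (X : Finset α) : ℕ :=
  (X.powerset.filter fun I => 𝓘 I).sup Finset.card

namespace ParametricMatroid

section Rank

omit [Fintype α] [DecidableEq α]

variable {𝓘 : Finset α → Prop}

lemma card_le_rank {I Y : Finset α} (hIY : I ⊆ Y) (hI : 𝓘 I) : I.card ≤ rank 𝓘 Y :=
  Finset.le_sup (f := Finset.card) (by simp [hIY, hI])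

lemma rank_le {Y : Finset α} {n : ℕ} (h : ∀ I ⊆ Y, 𝓘 I → I.card ≤ n) :
    rank 𝓘 Y ≤ n :=
  Finset.sup_le fun I hI => by
    simp only [mem_filter, mem_powerset] at hI
    exact h I hI.1 hI.2

end Rank

variable {R : Setoid α} [DecidableRel R.r]

omit [DecidableEq α] in
lemma mem_cls_iff {x y : α} : y ∈ cls R x ↔ R x y := by
  simp [cls]

omit [DecidableEq α] in
lemma mem_cls_self (x : α) : x ∈ cls R x :=
  mem_cls_iff.2 (R.refl x)

omit [DecidableEq α] in
lemma cls_eq_of_mem {x y : α} (h : y ∈ cls R x) : cls R y = cls R x := by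
  ext z
  simp only [mem_cls_iff] at h ⊢
  exact ⟨R.trans h, R.trans (R.symm h)⟩

lemma mem_lowerApprox_iff {x : α} {S : Finset α} : x ∈ lowerApprox R S ↔ cls R x ⊆ S := by
  simp [lowerApprox, cls, subset_iff]

lemma lowerApprox_subset (S : Finset α) : lowerApprox R S ⊆ S :=
  fun _ hx => mem_lowerApprox_iff.1 hx (mem_cls_self _)

lemma lowerApprox_mono {S T : Finset α} (h : S ⊆ T) : lowerApprox R S ⊆ lowerApprox R T :=
  fun _ hx => mem_lowerApprox_iff.2 ((mem_lowerApprox_iff.1 hx).trans h)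

lemma cls_subset_lowerApprox_of_mem {x : α} {S : Finset α} (hx : x ∈ lowerApprox R S) :
    cls R x ⊆ lowerApprox R S := fun _ hz =>
  mem_lowerApprox_iff.2 (cls_eq_of_mem hz ▸ mem_lowerApprox_iff.1 hx)

lemma lowerApprox_subset_lowerApprox_of_subset {S T : Finset α} (h : lowerApprox R S ⊆ T) :
    lowerApprox R S ⊆ lowerApprox R T :=
  fun _ hx => mem_lowerApprox_iff.2 ((cls_subset_lowerApprox_of_mem hx).trans h)

open Classical in
lemma lowerNum_eq_card_image_mk (S : Finset α) :
    lowerNum R S = ((lowerApprox R S).image (Quotient.mk R)).card := by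
  let g : Quotient R → Finset α := Quotient.lift (cls R) fun a b hab =>
    (cls_eq_of_mem (mem_cls_iff.2 hab)).symm
  have hg : Function.Injective g := by
    rintro ⟨a⟩ ⟨b⟩ hab
    change cls R a = cls R b at hab
    exact Quotient.sound (mem_cls_iff.1 (hab ▸ mem_cls_self b))
  have himage : (univ.image (cls R)).filter (· ⊆ S)
      = ((lowerApprox R S).image (Quotient.mk R)).image g := by
    ext P
    simp only [mem_filter, mem_image, mem_univ, true_and,
      image_image, Function.comp_def, mem_lowerApprox_iff]
    exact ⟨fun ⟨⟨x, hx⟩, hP⟩ => ⟨x, hx ▸ hP, hx⟩, fun ⟨x, hx, hP⟩ => ⟨⟨x, hP⟩, hP ▸ hx⟩⟩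
  rw [lowerNum, himage, card_image_of_injective _ hg]

lemma lowerNum_le_card (S : Finset α) : lowerNum R S ≤ S.card := by
  classical
  rw [lowerNum_eq_card_image_mk]
  exact card_image_le.trans (card_le_card (lowerApprox_subset S))

lemma lowerNum_mono {S T : Finset α} (h : S ⊆ T) : lowerNum R S ≤ lowerNum R T := by
  classical
  simp only [lowerNum_eq_card_image_mk]
  exact card_le_card (image_subset_image (lowerApprox_mono h))

lemma lowerNum_insert_le (u : α) (S : Finset α) :
    lowerNum R (insert u S) ≤ lowerNum R S + 1 := by
  classical
  simp only [lowerNum_eq_card_image_mk]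
  refine (card_le_card fun q hq => ?_).trans (card_insert_le (Quotient.mk R u) _)
  obtain ⟨x, hx, rfl⟩ := mem_image.1 hq
  by_cases hux : u ∈ cls R x
  · exact mem_insert.2 (Or.inl (Quotient.sound (mem_cls_iff.1 hux)))
  · refine mem_insert_of_mem (mem_image_of_mem _ (mem_lowerApprox_iff.2 ?_))
    intro z hz
    refine (mem_insert.1 (mem_lowerApprox_iff.1 hx hz)).resolve_left ?_
    rintro rfl
    exact hux hz

open Classical in
lemma rank_le_card_sub_lowerNum (X Y : Finset α) :
    rank (fun I => lowerApprox R I ⊆ X) Y ≤ Y.card - lowerNum R (Y \ lowerApprox R X) := by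
  refine rank_le fun I hIY hI => ?_
  have hcover : (lowerApprox R (Y \ lowerApprox R X)).image (Quotient.mk R)
      ⊆ (Y \ I).image (Quotient.mk R) := by
    intro q hq
    obtain ⟨x, hx, rfl⟩ := mem_image.1 hq
    obtain ⟨z, hz, hzI⟩ : ∃ z ∈ cls R x, z ∉ I := by
      refine not_subset.1 fun hxI => ?_
      have hxX := lowerApprox_subset_lowerApprox_of_subset hI (mem_lowerApprox_iff.2 hxI)
      exact (mem_sdiff.1 (lowerApprox_subset _ hx)).2 hxX
    have hzY := (mem_sdiff.1 (mem_lowerApprox_iff.1 hx hz)).1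
    exact mem_image.2 ⟨z, mem_sdiff.2 ⟨hzY, hzI⟩, (Quotient.sound (mem_cls_iff.1 hz)).symm⟩
  have hbound := (card_le_card hcover).trans card_image_le
  rw [← lowerNum_eq_card_image_mk, card_sdiff_of_subset hIY] at hbound
  have := card_le_card hIY
  omega

open Classical in
lemma card_sub_lowerNum_le_rank (X Y : Finset α) :
    Y.card - lowerNum R (Y \ lowerApprox R X) ≤ rank (fun I => lowerApprox R I ⊆ X) Y := by
  set L := lowerApprox R X
  set Q := (lowerApprox R (Y \ L)).image (Quotient.mk R)
  -- one representative of each class lying inside `Y \ R̲(X)`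
  set D := Q.image Quotient.out
  have hout (x : α) : (Quotient.mk R x).out ∈ cls R x :=
    mem_cls_iff.2 (R.symm (Quotient.mk_out x))
  have hDY : D ⊆ Y := by
    intro d hd
    obtain ⟨q, hq, rfl⟩ := mem_image.1 hd
    obtain ⟨x, hx, rfl⟩ := mem_image.1 hq
    exact (mem_sdiff.1 (mem_lowerApprox_iff.1 hx (hout x))).1
  have hindep : lowerApprox R (Y \ D) ⊆ X := by
    intro x hx
    by_contra hxX
    have hxYL : x ∈ lowerApprox R (Y \ L) := by
      refine mem_lowerApprox_iff.2 fun z hz => mem_sdiff.2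
        ⟨(mem_sdiff.1 (mem_lowerApprox_iff.1 hx hz)).1, fun hzL => hxX ?_⟩
      exact mem_lowerApprox_iff.1 hzL (cls_eq_of_mem hz ▸ mem_cls_self x)
    have hxD : (Quotient.mk R x).out ∈ D :=
      mem_image_of_mem _ (mem_image_of_mem _ hxYL)
    exact (mem_sdiff.1 (mem_lowerApprox_iff.1 hx (hout x))).2 hxD
  calc Y.card - lowerNum R (Y \ L) = (Y \ D).card := by
        rw [card_sdiff_of_subset hDY, card_image_of_injective _ Quotient.out_injective,
          lowerNum_eq_card_image_mk]
    _ ≤ _ := card_le_rank sdiff_subset hindep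

open Classical in
lemma rank_eq_card_sub_lowerNum (X Y : Finset α) :
    rank (fun I => lowerApprox R I ⊆ X) Y = Y.card - lowerNum R (Y \ lowerApprox R X) :=
  (rank_le_card_sub_lowerNum X Y).antisymm (card_sub_lowerNum_le_rank X Y)

end ParametricMatroid

open ParametricMatroid

open Classical in
theorem closure_of_parametric_matroid (R : Setoid α) [DecidableRel R.r] (X : Finset α) :
    ∀ Y : Finset α,
      (Finset.univ.filter fun u =>
          rank (fun I => lowerApprox R I ⊆ X) Y
            = rank (fun I => lowerApprox R I ⊆ X) (insert u Y))
        = Y ∪ ((Finset.univ \ Y).filter fun y =>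
            lowerNum R (insert y Y \ lowerApprox R X) - lowerNum R (Y \ lowerApprox R X) = 1) := by
  intro Y
  ext u
  simp only [mem_filter, mem_univ, true_and, mem_union, mem_sdiff, rank_eq_card_sub_lowerNum]
  by_cases hu : u ∈ Y
  · simp [hu, insert_eq_self.2 hu]
  set L := lowerApprox R X
  have hmono : lowerNum R (Y \ L) ≤ lowerNum R (insert u Y \ L) :=
    lowerNum_mono (sdiff_subset_sdiff (subset_insert u Y) le_rfl)
  have hstep : lowerNum R (insert u Y \ L) ≤ lowerNum R (Y \ L) + 1 :=
    (lowerNum_mono (by intro z; simp only [mem_sdiff, mem_insert]; tauto)).trans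
      (lowerNum_insert_le u (Y \ L))
  have hcard : lowerNum R (Y \ L) ≤ Y.card :=
    (lowerNum_le_card _).trans (card_le_card sdiff_subset)
  rw [card_insert_of_notMem hu]
  simp only [hu, false_or, not_false_eq_true, true_and]
  omega
end
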